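/- Let V_β(r) = −(1/2)((λβ/4) sinh(r) + log cosh(r)). The local maximum b_β of V_β satisfies b_β = −λβ/4 + o(β²) and V_β(b_β) = O(β²) as β → 0. -/

import Mathlib

open Real Filter Asymptotics Topology

/-!
With `c = λβ/4`, a critical point `r` of `V_β` satisfies `c cosh r + tanh r = 0`, i.e.
`sinh r = -c cosh² r`. On `|r| ≤ 1` this gives `|r| ≤ |sinh r| = O(c)`, and then
`r + c = -(sinh r - r) - c sinh² r = O(r³) + O(c³) = O(β³)`. Finally
`0 ≤ log cosh r ≤ sinh² r`, so `V_β(r) = O(c |sinh r| + sinh² r) = O(β²)`.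
-/

/-- The potential `V_β(r) = −(1/2)((λβ/4) sinh r + log cosh r)`. -/
noncomputable def Vpot (lam β r : ℝ) : ℝ :=
  -(1 / 2) * (lam * (β / 4) * Real.sinh r + Real.log (Real.cosh r))

theorem abs_sinh_sub_self_le {x : ℝ} (hx : |x| ≤ 1) : |sinh x - x| ≤ |x| ^ 3 := by
  have hpos := Real.exp_bound hx (by norm_num : 0 < 3)
  have hneg := Real.exp_bound (x := -x) (by rwa [abs_neg]) (by norm_num : 0 < 3)
  simp only [Finset.sum_range_succ, Finset.sum_range_zero, abs_neg] at hpos hneg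
  have hexp : |exp x - (1 + x + x ^ 2 / 2)| ≤ |x| ^ 3 * (2 / 9) := by
    convert hpos using 2 <;> norm_num [Nat.factorial]
  have hexp_neg : |exp (-x) - (1 - x + x ^ 2 / 2)| ≤ |x| ^ 3 * (2 / 9) := by
    convert hneg using 2 <;> norm_num [Nat.factorial]
    ring
  rw [sinh_eq, abs_le]
  rw [abs_le] at hexp hexp_neg
  constructor <;> nlinarith [hexp.1, hexp.2, hexp_neg.1, hexp_neg.2]

theorem abs_le_abs_sinh (x : ℝ) : |x| ≤ |sinh x| := by
  rw [abs_sinh]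
  exact self_le_sinh_iff.2 (abs_nonneg x)

theorem log_cosh_le_sinh_sq (x : ℝ) : log (cosh x) ≤ sinh x ^ 2 := by
  have := log_le_sub_one_of_pos (cosh_pos x)
  nlinarith [one_le_cosh x, cosh_sq x]

section CriticalPoint

variable {c r : ℝ} (hcrit : sinh r = -c * cosh r ^ 2) (hr : |r| ≤ 1)
include hcrit hr

theorem abs_sinh_le_of_critical : |sinh r| ≤ cosh 1 ^ 2 * |c| := by
  have hcosh : cosh r ^ 2 ≤ cosh 1 ^ 2 :=
    pow_le_pow_left₀ (cosh_pos r).le (cosh_le_cosh.2 (by simpa using hr)) 2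
  rw [hcrit, abs_mul, abs_neg, abs_of_nonneg (sq_nonneg (cosh r)), mul_comm]
  exact mul_le_mul_of_nonneg_right hcosh (abs_nonneg c)

theorem abs_add_le_of_critical : |r + c| ≤ (cosh 1 ^ 6 + cosh 1 ^ 4) * |c| ^ 3 := by
  have hsinh := abs_sinh_le_of_critical hcrit hr
  have hr' : |r| ≤ cosh 1 ^ 2 * |c| := (abs_le_abs_sinh r).trans hsinh
  have hdecomp : r + c = -(sinh r - r) - c * sinh r ^ 2 := by
    linear_combination hcrit - c * cosh_sq r
  calc |r + c| ≤ |sinh r - r| + |c| * |sinh r| ^ 2 := by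
        rw [hdecomp, sq_abs]
        refine (abs_sub _ _).trans_eq ?_
        rw [abs_neg, abs_mul, abs_of_nonneg (sq_nonneg (sinh r))]
    _ ≤ (cosh 1 ^ 2 * |c|) ^ 3 + |c| * (cosh 1 ^ 2 * |c|) ^ 2 := by
        gcongr
        exact (abs_sinh_sub_self_le hr).trans (by gcongr)
    _ = (cosh 1 ^ 6 + cosh 1 ^ 4) * |c| ^ 3 := by ring

theorem abs_mul_sinh_add_log_cosh_le_of_critical :
    |c * sinh r + log (cosh r)| ≤ (cosh 1 ^ 2 + cosh 1 ^ 4) * |c| ^ 2 := by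
  have hsinh := abs_sinh_le_of_critical hcrit hr
  have hlog : 0 ≤ log (cosh r) := log_nonneg (one_le_cosh r)
  calc |c * sinh r + log (cosh r)| ≤ |c| * |sinh r| + |sinh r| ^ 2 := by
        refine (abs_add_le _ _).trans ?_
        rw [abs_mul, abs_of_nonneg hlog, sq_abs]
        gcongr
        exact log_cosh_le_sinh_sq r
    _ ≤ |c| * (cosh 1 ^ 2 * |c|) + (cosh 1 ^ 2 * |c|) ^ 2 := by gcongr
    _ = (cosh 1 ^ 2 + cosh 1 ^ 4) * |c| ^ 2 := by ring

end CriticalPoint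

theorem hasDerivAt_Vpot (lam β r : ℝ) :
    HasDerivAt (Vpot lam β) (-(1 / 2) * (lam * (β / 4) * cosh r + sinh r / cosh r)) r :=
  (((hasDerivAt_sinh r).const_mul _).add ((hasDerivAt_cosh r).log (cosh_pos r).ne')).const_mul _

theorem sinh_eq_of_isLocalMax_Vpot {lam β r : ℝ} (h : IsLocalMax (Vpot lam β) r) :
    sinh r = -(lam * (β / 4)) * cosh r ^ 2 := by
  have hcrit := h.hasDerivAt_eq_zero (hasDerivAt_Vpot lam β r)
  have := cosh_pos r
  field_simp at hcrit
  linarith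

theorem abs_mul_div_four_pow (lam β : ℝ) (n : ℕ) :
    |lam * (β / 4)| ^ n = |lam / 4| ^ n * ‖β ^ n‖ := by
  rw [norm_pow, norm_eq_abs, ← mul_pow, ← abs_mul]
  ring_nf

theorem stmt_3_general (lam : ℝ) (b : ℝ → ℝ)
    (hb : ∀ᶠ β in 𝓝[>] (0 : ℝ), IsLocalMax (Vpot lam β) (b β) ∧ |b β| ≤ 1) :
    ((fun β => b β - (-(lam * β / 4))) =o[𝓝[>] (0 : ℝ)] fun β => β ^ 2) ∧
      (fun β => Vpot lam β (b β)) =O[𝓝[>] (0 : ℝ)] fun β => β ^ 2 := by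
  have hcrit : ∀ᶠ β in 𝓝[>] (0 : ℝ),
      sinh (b β) = -(lam * (β / 4)) * cosh (b β) ^ 2 ∧ |b β| ≤ 1 :=
    hb.mono fun β h => ⟨sinh_eq_of_isLocalMax_Vpot h.1, h.2⟩
  constructor
  · have hcube : (fun β : ℝ => β ^ 3) =o[𝓝[>] (0 : ℝ)] fun β => β ^ 2 :=
      (isLittleO_pow_pow (by norm_num)).mono nhdsWithin_le_nhds
    refine (IsBigO.of_bound ((cosh 1 ^ 6 + cosh 1 ^ 4) * |lam / 4| ^ 3) ?_).trans_isLittleO hcube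
    filter_upwards [hcrit] with β ⟨hsinh, hr⟩
    calc ‖b β - -(lam * β / 4)‖ = |b β + lam * (β / 4)| := by rw [norm_eq_abs]; ring_nf
      _ ≤ _ := abs_add_le_of_critical hsinh hr
      _ = _ := by rw [abs_mul_div_four_pow, mul_assoc]
  · refine IsBigO.of_bound ((cosh 1 ^ 2 + cosh 1 ^ 4) * |lam / 4| ^ 2 / 2) ?_
    filter_upwards [hcrit] with β ⟨hsinh, hr⟩
    calc ‖Vpot lam β (b β)‖ = |lam * (β / 4) * sinh (b β) + log (cosh (b β))| / 2 := by
          rw [Vpot, norm_eq_abs, abs_mul]; norm_num; ring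
      _ ≤ (cosh 1 ^ 2 + cosh 1 ^ 4) * |lam * (β / 4)| ^ 2 / 2 := by
          gcongr; exact abs_mul_sinh_add_log_cosh_le_of_critical hsinh hr
      _ = _ := by rw [abs_mul_div_four_pow]; ring

/-- The local maximum `b_β` of `V_β` satisfies `b_β = −λβ/4 + o(β²)` and
`V_β(b_β) = O(β²)` as `β → 0`. -/
theorem stmt_3 (lam : ℝ) (hlam : 0 < lam) (b : ℝ → ℝ)
    (hb : ∀ᶠ β in 𝓝[>] (0 : ℝ), IsLocalMax (Vpot lam β) (b β) ∧ |b β| ≤ 1) :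
    ((fun β => b β - (-(lam * β / 4))) =o[𝓝[>] (0 : ℝ)] fun β => β ^ 2) ∧
      (fun β => Vpot lam β (b β)) =O[𝓝[>] (0 : ℝ)] fun β => β ^ 2 :=
  stmt_3_general lam b hb
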